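/- Fix r and s with r = 2s+1, and suppose α(G(n,r,s)) ≤ C₀ n^s for a constant C₀ depending only on r, s. Let Γ be a maximum independent set in the induced subgraph of G(n,r,s) on W, and let U₁ be the set of vertices w ∈ W \ Γ with exactly one neighbor in Γ. Then |U₁| ≤ C₂ n^{s+1} for a constant C₂ depending only on r and s. -/

import Mathlib

/-- The Johnson-type graph `G(n,r,s)`: vertices are the `r`-element subsets of
`{1,…,n}` (modeled as `Finset (Fin n)` of cardinality `r`), two distinct vertices
adjacent iff their intersection has size exactly `s`. -/
def johnson (n r s : ℕ) : SimpleGraph {A : Finset (Fin n) // A.card = r} where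
  Adj A B := A ≠ B ∧ (A.1 ∩ B.1).card = s
  symm := by
    constructor
    intro A B h
    exact ⟨h.1.symm, by rw [Finset.inter_comm]; exact h.2⟩
  loopless := by constructor; intro A h; exact h.1 rfl

instance (n r s : ℕ) : DecidableRel (johnson n r s).Adj := fun A B =>
  inferInstanceAs (Decidable (A ≠ B ∧ (A.1 ∩ B.1).card = s))

/-- `Γ` is an independent set of vertices in `G`. -/
def IsIndep {V : Type*} (G : SimpleGraph V) (Γ : Finset V) : Prop :=
  ∀ x ∈ Γ, ∀ y ∈ Γ, ¬ G.Adj x y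

/-- The number of edges of `G` with both endpoints in `W`. -/
def edgeCount {V : Type*} [DecidableEq V] (G : SimpleGraph V) [DecidableRel G.Adj]
    (W : Finset V) : ℕ :=
  ((W ×ˢ W).filter fun p => G.Adj p.1 p.2).card / 2

/-!
If `w, w' ∉ Γ` both have `x` as their only neighbour in `Γ` and are not adjacent, then
`(Γ \ {x}) ∪ {w, w'}` is a larger independent set. Hence the vertices of `U₁` attached to a fixed
`x ∈ Γ` form a clique of `r`-sets, each meeting `x` in exactly `s` points. Such a family has at
most `C(r, s) · n` members, because a member is determined by its trace on `x` together with any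
one of its points outside `x` (two members sharing both would meet in `s + 1` points). Summing
over `x ∈ Γ` gives `|U₁| ≤ C₀ C(r, s) n ^ (s + 1)`.
-/

open Finset

theorem Finset.card_le_choose_mul_of_inter_card_eq {α : Type*} [Fintype α] [DecidableEq α]
    {A : Finset α} {K : Finset (Finset α)} {s : ℕ}
    (hA : ∀ B ∈ K, #(B ∩ A) = s ∧ ¬B ⊆ A)
    (hK : ∀ B ∈ K, ∀ B' ∈ K, B ≠ B' → #(B ∩ B') = s) :
    #K ≤ (#A).choose s * Fintype.card α := by
  calc #K ≤ #(A.powersetCard s ×ˢ (univ : Finset α)) := by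
        refine card_le_card_of_forall_subsingleton (fun B p => p.1 = B ∩ A ∧ p.2 ∈ B \ A) ?_ ?_
        · intro B hB
          obtain ⟨m, hm⟩ := sdiff_nonempty.2 (hA B hB).2
          exact ⟨(B ∩ A, m), by simp [inter_subset_right, (hA B hB).1], rfl, hm⟩
        · rintro ⟨T, m⟩ - B ⟨hB, rfl, hmB⟩ B' ⟨hB', hT, hmB'⟩
          by_contra hne
          have hT : B ∩ A = B' ∩ A := hT
          have hsub : insert m (B ∩ A) ⊆ B ∩ B' :=
            insert_subset (mem_inter.2 ⟨(mem_sdiff.1 hmB).1, (mem_sdiff.1 hmB').1⟩)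
              (subset_inter inter_subset_left (hT ▸ inter_subset_left))
          have hm : m ∉ B ∩ A := fun h => (mem_sdiff.1 hmB).2 (mem_inter.1 h).2
          have := card_le_card hsub
          rw [card_insert_of_notMem hm, (hA B hB).1, hK B hB B' hB' hne] at this
          omega
    _ = (#A).choose s * Fintype.card α := by simp [card_powersetCard]

def IsMaximumIndepIn {V : Type*} (G : SimpleGraph V) (W Γ : Finset V) : Prop :=
  Γ ⊆ W ∧ IsIndep G Γ ∧ ∀ Γ' ⊆ W, IsIndep G Γ' → #Γ' ≤ #Γ

section Indep

variable {V : Type*} {G : SimpleGraph V}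

theorem IsIndep.mono {Γ Γ' : Finset V} (h : IsIndep G Γ) (h' : Γ' ⊆ Γ) : IsIndep G Γ' :=
  fun x hx y hy => h x (h' hx) y (h' hy)

theorem isIndep_insert [DecidableEq V] {v : V} {Γ : Finset V} :
    IsIndep G (insert v Γ) ↔ IsIndep G Γ ∧ ∀ u ∈ Γ, ¬G.Adj v u := by
  refine ⟨fun h => ⟨h.mono (subset_insert _ _), fun u hu => h v (mem_insert_self _ _) u
    (mem_insert_of_mem hu)⟩, ?_⟩
  rintro ⟨hΓ, hv⟩ x hx y hy
  rcases mem_insert.1 hx with rfl | hxΓ <;> rcases mem_insert.1 hy with rfl | hyΓ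
  · exact G.irrefl
  · exact hv y hyΓ
  · exact fun h => hv x hxΓ h.symm
  · exact hΓ x hxΓ y hyΓ

theorem IsMaximumIndepIn.adj_of_unique_neighbor [DecidableEq V] {W Γ : Finset V}
    (hΓ : IsMaximumIndepIn G W Γ) {x w w' : V} (hx : x ∈ Γ) (hw : w ∈ W \ Γ) (hw' : w' ∈ W \ Γ)
    (huw : ∀ y ∈ Γ, G.Adj y w → y = x) (huw' : ∀ y ∈ Γ, G.Adj y w' → y = x) (hne : w ≠ w') :
    G.Adj w w' := by
  obtain ⟨hΓW, hΓind, hmax⟩ := hΓ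
  rw [mem_sdiff] at hw hw'
  by_contra hadj
  have hnbr {u} (huw : ∀ y ∈ Γ, G.Adj y u → y = x) : ∀ y ∈ Γ.erase x, ¬G.Adj u y :=
    fun y hy h => ne_of_mem_erase hy (huw y (mem_of_mem_erase hy) h.symm)
  have hind : IsIndep G (insert w (insert w' (Γ.erase x))) := by
    refine isIndep_insert.2 ⟨isIndep_insert.2 ⟨hΓind.mono (erase_subset _ _), hnbr huw'⟩, ?_⟩
    rintro u hu
    rcases mem_insert.1 hu with rfl | hu
    · exact hadj
    · exact hnbr huw u hu
  have hsub : insert w (insert w' (Γ.erase x)) ⊆ W :=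
    insert_subset hw.1 (insert_subset hw'.1 ((erase_subset _ _).trans hΓW))
  have hcard : #(insert w (insert w' (Γ.erase x))) = #Γ + 1 := by
    rw [card_insert_of_notMem, card_insert_of_notMem, card_erase_add_one hx]
    · exact fun h => hw'.2 (mem_of_mem_erase h)
    · simp only [mem_insert, not_or]
      exact ⟨hne, fun h => hw.2 (mem_of_mem_erase h)⟩
  have := hmax _ hsub hind
  omega

end Indep

theorem johnson_card_le_of_isClique {n r s : ℕ} {x : {A : Finset (Fin n) // A.card = r}}
    {F : Finset {A : Finset (Fin n) // A.card = r}} (hx : ∀ w ∈ F, (johnson n r s).Adj x w)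
    (hF : (johnson n r s).IsClique (F : Set {A : Finset (Fin n) // A.card = r})) :
    #F ≤ r.choose s * n := by
  have key := card_le_choose_mul_of_inter_card_eq (A := x.1)
    (K := F.map (Function.Embedding.subtype _)) (s := s) ?_ ?_
  · simpa [x.2] using key
  · simp only [mem_map, Function.Embedding.coe_subtype]
    rintro _ ⟨w, hw, rfl⟩
    refine ⟨by rw [inter_comm]; exact (hx w hw).2, fun hsub => (hx w hw).1 ?_⟩
    exact (Subtype.ext (eq_of_subset_of_card_le hsub (by rw [w.2, x.2]))).symm
  · simp only [mem_map, Function.Embedding.coe_subtype]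
    rintro _ ⟨w, hw, rfl⟩ _ ⟨w', hw', rfl⟩ hne
    exact (hF hw hw' fun h => hne (congrArg Subtype.val h)).2

theorem stmt5_general (r s C₀ : ℕ)
    (hα : ∀ n : ℕ, ∀ Γ : Finset {A : Finset (Fin n) // A.card = r},
      IsIndep (johnson n r s) Γ → Γ.card ≤ C₀ * n ^ s) :
    ∃ C₂ : ℕ, ∀ n : ℕ, ∀ W Γ : Finset {A : Finset (Fin n) // A.card = r},
      Γ ⊆ W → IsIndep (johnson n r s) Γ →
      (∀ Γ' ⊆ W, IsIndep (johnson n r s) Γ' → Γ'.card ≤ Γ.card) →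
      ((W \ Γ).filter
          (fun w => (Γ.filter (fun x => (johnson n r s).Adj x w)).card = 1)).card
        ≤ C₂ * n ^ (s + 1) := by
  refine ⟨C₀ * r.choose s, fun n W Γ hΓW hΓ hmax => ?_⟩
  set G := johnson n r s
  set U := (W \ Γ).filter fun w => #(Γ.filter fun x => G.Adj x w) = 1
  have hunique {w} (hw : w ∈ U) {x} (hx : x ∈ Γ) (hxw : G.Adj x w) :
      ∀ y ∈ Γ, G.Adj y w → y = x := fun y hy hyw =>
    card_le_one.1 (mem_filter.1 hw).2.le y (mem_filter.2 ⟨hy, hyw⟩) x (mem_filter.2 ⟨hx, hxw⟩)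
  have hcover : U ⊆ Γ.biUnion fun x => U.filter (G.Adj x ·) := by
    intro w hw
    obtain ⟨x, hx⟩ := card_eq_one.1 (mem_filter.1 hw).2
    obtain ⟨hxΓ, hxw⟩ := mem_filter.1 (hx ▸ mem_singleton_self x)
    exact mem_biUnion.2 ⟨x, hxΓ, mem_filter.2 ⟨hw, hxw⟩⟩
  have hfiber : ∀ x ∈ Γ, #(U.filter (G.Adj x ·)) ≤ r.choose s * n := by
    intro x hx
    refine johnson_card_le_of_isClique (fun w hw => (mem_filter.1 hw).2) ?_
    intro w hw w' hw' hne
    rw [coe_filter] at hw hw'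
    exact IsMaximumIndepIn.adj_of_unique_neighbor ⟨hΓW, hΓ, hmax⟩ hx (mem_filter.1 hw.1).1
      (mem_filter.1 hw'.1).1 (hunique hw.1 hx hw.2) (hunique hw'.1 hx hw'.2) hne
  calc #U ≤ #Γ * (r.choose s * n) :=
        (card_le_card hcover).trans (card_biUnion_le_card_mul _ _ _ hfiber)
    _ ≤ C₀ * n ^ s * (r.choose s * n) := Nat.mul_le_mul_right _ (hα n Γ hΓ)
    _ = C₀ * r.choose s * n ^ (s + 1) := by ring

theorem stmt5 (r s C₀ : ℕ) (hr : r = 2 * s + 1)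
    (hα : ∀ n : ℕ, ∀ Γ : Finset {A : Finset (Fin n) // A.card = r},
      IsIndep (johnson n r s) Γ → Γ.card ≤ C₀ * n ^ s) :
    ∃ C₂ : ℕ, ∀ n : ℕ, ∀ W Γ : Finset {A : Finset (Fin n) // A.card = r},
      Γ ⊆ W → IsIndep (johnson n r s) Γ →
      (∀ Γ' ⊆ W, IsIndep (johnson n r s) Γ' → Γ'.card ≤ Γ.card) →
      ((W \ Γ).filter
          (fun w => (Γ.filter (fun x => (johnson n r s).Adj x w)).card = 1)).card
        ≤ C₂ * n ^ (s + 1) :=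
  stmt5_general r s C₀ hα
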